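/- (Eckart–Young optimality, spectral norm) Let A ∈ ℝ^{N×M} have singular values s_1 ≥ … ≥ s_d ≥ 0, d = min(N,M), and let 0 < t < rank(A) with rank-t truncated SVD A_t. Then for every matrix B ∈ ℝ^{N×M} with rank(B) ≤ t one has ‖A − B‖₂ ≥ s_{t+1} = ‖A − A_t‖₂; i.e., A_t is a best rank-t approximation of A in the spectral norm. -/

import Mathlib

open Matrix

/-- A singular value decomposition of `A`: `U`, `V` orthogonal, `A = U * S * Vᵀ`,
`S` zero off the diagonal with nonincreasing nonnegative diagonal entries. -/
def IsSVD {N M : ℕ} (A : Matrix (Fin N) (Fin M) ℝ)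
    (U : Matrix (Fin N) (Fin N) ℝ) (S : Matrix (Fin N) (Fin M) ℝ)
    (V : Matrix (Fin M) (Fin M) ℝ) : Prop :=
  Uᵀ * U = 1 ∧ Vᵀ * V = 1 ∧ A = U * S * Vᵀ ∧
  (∀ (i : Fin N) (j : Fin M), (i : ℕ) ≠ (j : ℕ) → S i j = 0) ∧
  (∀ (i : Fin N) (j : Fin M), (i : ℕ) = (j : ℕ) → 0 ≤ S i j) ∧
  (∀ (i i' : Fin N) (j j' : Fin M), (i : ℕ) = (j : ℕ) → (i' : ℕ) = (j' : ℕ) →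
    (i : ℕ) ≤ (i' : ℕ) → S i' j' ≤ S i j)

/-- The spectral (ℓ²-operator) norm of a matrix: the operator norm of the induced linear
map between Euclidean spaces. -/
noncomputable def matrixSpectralNorm {N M : ℕ} (A : Matrix (Fin N) (Fin M) ℝ) : ℝ :=
  ‖LinearMap.toContinuousLinearMap (Matrix.toEuclideanLin A)‖

/-- The Frobenius norm of a matrix. -/
noncomputable def frobeniusNorm {N M : ℕ} (A : Matrix (Fin N) (Fin M) ℝ) : ℝ :=
  Real.sqrt (∑ i, ∑ j, |A i j| ^ 2)

/-- The rank-`t` truncated SVD `A_t = ∑_{i=1}^t sᵢ • uᵢ vᵢᵀ` built from the SVD factors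
`U`, `S`, `V`. -/
noncomputable def svdTruncation {N M : ℕ} (U : Matrix (Fin N) (Fin N) ℝ)
    (S : Matrix (Fin N) (Fin M) ℝ) (V : Matrix (Fin M) (Fin M) ℝ)
    (t : ℕ) (ht : t ≤ min N M) : Matrix (Fin N) (Fin M) ℝ :=
  ∑ i : Fin t,
    S ⟨i, lt_of_lt_of_le i.isLt (ht.trans (min_le_left N M))⟩
      ⟨i, lt_of_lt_of_le i.isLt (ht.trans (min_le_right N M))⟩ •
    vecMulVec (fun a => U a ⟨i, lt_of_lt_of_le i.isLt (ht.trans (min_le_left N M))⟩)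
      (fun b => V b ⟨i, lt_of_lt_of_le i.isLt (ht.trans (min_le_right N M))⟩)

/-!
Orthogonal factors do not change the spectral norm, so `A - B` may be replaced by
`S - Uᵀ B V`, whose second term still has rank at most `t`. Such a matrix annihilates a nonzero
vector `x` supported on the first `t + 1` coordinates, and there `‖S x‖ ≥ s_{t+1} ‖x‖` because
`Sᵀ S` is diagonal with entries `s_j ^ 2`. For the truncation, `A - A_t = U S' Vᵀ` where `S'` is
`S` with its first `t` columns cleared; `S'ᵀ S'` is diagonal with largest entry `s_{t+1} ^ 2`,
so `‖S'‖ = s_{t+1}`.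
-/

open scoped Matrix.Norms.L2Operator

namespace Matrix

lemma exists_mulVec_eq_zero_of_rank_lt {K m n : Type*} [Field K] [Fintype n] {B : Matrix m n K}
    (hB : B.rank < Fintype.card n) : ∃ x ≠ 0, B *ᵥ x = 0 := by
  have h := LinearMap.finrank_range_add_finrank_ker B.mulVecLin
  rw [Module.finrank_fintype_fun_eq_card, ← rank] at h
  have hker : 0 < Module.finrank K (LinearMap.ker B.mulVecLin) := by omega
  obtain ⟨x, hx, hx0⟩ :=
    Submodule.exists_mem_ne_zero_of_ne_bot (Submodule.one_le_finrank_iff.mp hker)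
  exact ⟨x, hx0, hx⟩

variable {𝕜 : Type*} [RCLike 𝕜] {m n k l : Type*} [Fintype m] [Fintype n] [Fintype k] [Fintype l]

lemma l2_opNorm_le_one_of_conjTranspose_mul_self_eq_one [DecidableEq n] {U : Matrix m n 𝕜}
    (hU : Uᴴ * U = 1) : ‖U‖ ≤ 1 := by
  have h : ‖U‖ * ‖U‖ ≤ 1 := by
    rw [← l2_opNorm_conjTranspose_mul_self, hU, ← diagonal_one, l2_opNorm_diagonal]
    exact pi_norm_le_iff_of_nonneg zero_le_one |>.mpr fun _ ↦ norm_one.le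
  nlinarith [norm_nonneg U]

lemma l2_opNorm_mul_mul_conjTranspose [DecidableEq m] [DecidableEq k] [DecidableEq l]
    [DecidableEq n] {U : Matrix m k 𝕜} {V : Matrix n l 𝕜} (hU : Uᴴ * U = 1) (hV : Vᴴ * V = 1)
    (D : Matrix k l 𝕜) :
    ‖U * D * Vᴴ‖ = ‖D‖ := by
  have hU1 := l2_opNorm_le_one_of_conjTranspose_mul_self_eq_one hU
  have hV1 : ‖Vᴴ‖ ≤ 1 := (l2_opNorm_conjTranspose V).trans_le
    (l2_opNorm_le_one_of_conjTranspose_mul_self_eq_one hV)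
  refine le_antisymm ?_ ?_
  · calc ‖U * D * Vᴴ‖ ≤ ‖U‖ * ‖D‖ * ‖Vᴴ‖ :=
          (l2_opNorm_mul _ _).trans (by gcongr; exact l2_opNorm_mul _ _)
      _ ≤ 1 * ‖D‖ * 1 := by gcongr
      _ = ‖D‖ := by ring
  · have hD : D = Uᴴ * (U * D * Vᴴ) * V := by
      simp only [Matrix.mul_assoc, hV, ← Matrix.mul_assoc Uᴴ U, hU, Matrix.mul_one, Matrix.one_mul]
    calc ‖D‖ = ‖Uᴴ * (U * D * Vᴴ) * V‖ := congrArg _ hD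
      _ ≤ ‖Uᴴ‖ * ‖U * D * Vᴴ‖ * ‖V‖ :=
          (l2_opNorm_mul _ _).trans (by gcongr; exact l2_opNorm_mul _ _)
      _ ≤ 1 * ‖U * D * Vᴴ‖ * 1 := by
          gcongr
          · exact (l2_opNorm_conjTranspose U).trans_le hU1
          · exact l2_opNorm_le_one_of_conjTranspose_mul_self_eq_one hV
      _ = ‖U * D * Vᴴ‖ := by ring

lemma l2_opNorm_submatrix_le [DecidableEq n] [DecidableEq l] (A : Matrix m n 𝕜) {e : l → n}
    (he : Function.Injective e) : ‖A.submatrix id e‖ ≤ ‖A‖ := by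
  have hP : ((1 : Matrix n n 𝕜).submatrix id e)ᴴ * (1 : Matrix n n 𝕜).submatrix id e = 1 := by
    rw [conjTranspose_submatrix, conjTranspose_one, ← submatrix_mul _ _ _ _ _ Function.bijective_id,
      Matrix.one_mul, submatrix_one _ he]
  calc ‖A.submatrix id e‖ = ‖A * (1 : Matrix n n 𝕜).submatrix (Equiv.refl n) e‖ := by
        rw [mul_submatrix_one]; rfl
    _ ≤ ‖A‖ * 1 := (l2_opNorm_mul _ _).trans
        (by gcongr; exact l2_opNorm_le_one_of_conjTranspose_mul_self_eq_one hP)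
    _ = ‖A‖ := mul_one _

lemma le_l2_opNorm_of_mul_norm_le [DecidableEq n] {A : Matrix m n 𝕜} {x : n → 𝕜} (hx : x ≠ 0)
    {c : ℝ}
    (h : c * ‖WithLp.toLp 2 x‖ ≤ ‖WithLp.toLp 2 (A *ᵥ x)‖) : c ≤ ‖A‖ := by
  have hx' : 0 < ‖WithLp.toLp 2 x‖ := norm_pos_iff.mpr (by simpa using hx)
  calc c ≤ ‖WithLp.toLp 2 (A *ᵥ x)‖ / ‖WithLp.toLp 2 x‖ := (le_div_iff₀ hx').mpr h
    _ ≤ ‖A‖ := (toEuclideanLin.trans LinearMap.toContinuousLinearMap A).ratio_le_opNorm _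

lemma l2_opNorm_sq_of_transpose_mul_self_eq_diagonal [DecidableEq n] {D : Matrix m n ℝ}
    {d : n → ℝ} (hD : Dᵀ * D = diagonal d) : ‖D‖ ^ 2 = ‖d‖ := by
  rw [sq, ← l2_opNorm_conjTranspose_mul_self, conjTranspose_eq_transpose_of_trivial, hD,
    l2_opNorm_diagonal]

lemma norm_mulVec_sq_of_transpose_mul_self_eq_diagonal [DecidableEq n] {D : Matrix m n ℝ}
    {d : n → ℝ} (hD : Dᵀ * D = diagonal d) (x : n → ℝ) :
    ‖WithLp.toLp 2 (D *ᵥ x)‖ ^ 2 = ∑ j, d j * x j ^ 2 := by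
  rw [← real_inner_self_eq_norm_sq, EuclideanSpace.inner_toLp_toLp, star_trivial,
    dotProduct_mulVec, ← mulVec_transpose, mulVec_mulVec, hD]
  simp only [dotProduct, mulVec_diagonal, sq]
  exact Finset.sum_congr rfl fun j _ ↦ by ring

lemma le_l2_opNorm_sub_of_rank_lt [DecidableEq n] {C B : Matrix m n ℝ} {e : n → ℝ} {c : ℝ}
    (hC : Cᵀ * C = diagonal e) (hc : ∀ j, c ^ 2 ≤ e j) (hB : B.rank < Fintype.card n) :
    c ≤ ‖C - B‖ := by
  obtain ⟨x, hx0, hBx⟩ := exists_mulVec_eq_zero_of_rank_lt hB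
  refine le_l2_opNorm_of_mul_norm_le hx0 (abs_le_of_sq_le_sq' ?_ (by positivity)).2
  rw [sub_mulVec, hBx, sub_zero, mul_pow, EuclideanSpace.norm_sq_eq,
    norm_mulVec_sq_of_transpose_mul_self_eq_diagonal hC, Finset.mul_sum]
  exact Finset.sum_le_sum fun j _ ↦ by
    rw [Real.norm_eq_abs, sq_abs]; exact mul_le_mul_of_nonneg_right (hc j) (sq_nonneg _)

def IsRectDiag {R : Type*} [Zero R] {N M : ℕ} (D : Matrix (Fin N) (Fin M) R) : Prop :=
  ∀ (i : Fin N) (j : Fin M), (i : ℕ) ≠ j → D i j = 0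

namespace IsRectDiag

variable {N M : ℕ}

lemma transpose_mul_self {R : Type*} [CommSemiring R] {D : Matrix (Fin N) (Fin M) R}
    (hD : IsRectDiag D) : Dᵀ * D = diagonal fun j ↦ ∑ i, D i j ^ 2 := by
  ext j j'
  rw [mul_apply, diagonal_apply]
  split_ifs with hjj'
  · subst hjj'
    simp only [transpose_apply, sq]
  · refine Finset.sum_eq_zero fun i _ ↦ ?_
    rw [transpose_apply]
    by_cases hij : (i : ℕ) = j
    · rw [hD i j' fun h ↦ hjj' (Fin.ext (hij.symm.trans h)), mul_zero]
    · rw [hD i j hij, zero_mul]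

lemma submatrix_castLE {R : Type*} [Zero R] {D : Matrix (Fin N) (Fin M) R} (hD : IsRectDiag D)
    {k : ℕ} (hk : k ≤ M) : IsRectDiag (D.submatrix id (Fin.castLE hk)) :=
  fun i _ hij ↦ hD i _ hij

lemma mul_diagonal {R : Type*} [NonUnitalNonAssocSemiring R] {D : Matrix (Fin N) (Fin M) R}
    (hD : IsRectDiag D) (q : Fin M → R) : IsRectDiag (D * diagonal q) := fun i j hij ↦ by
  rw [Matrix.mul_diagonal, hD i j hij, zero_mul]

lemma mul_apply_eq {R : Type*} [NonUnitalNonAssocSemiring R] {m : Type*}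
    {D : Matrix (Fin N) (Fin M) R} (hD : IsRectDiag D) (U : Matrix m (Fin N) R) (a : m)
    {i : Fin N} {j : Fin M} (hij : (i : ℕ) = j) : (U * D) a j = U a i * D i j := by
  rw [mul_apply]
  refine Finset.sum_eq_single i (fun i' _ hi' ↦ ?_) (by simp)
  rw [hD i' j fun h ↦ hi' (Fin.ext (h.trans hij.symm)), mul_zero]

lemma sum_sq_le {D : Matrix (Fin N) (Fin M) ℝ} (hD : IsRectDiag D) (j : Fin M) {c : ℝ}
    (hc0 : 0 ≤ c) (hc : ∀ i : Fin N, (i : ℕ) = j → D i j ^ 2 ≤ c) : ∑ i, D i j ^ 2 ≤ c := by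
  by_cases h : ∃ i : Fin N, (i : ℕ) = j
  · obtain ⟨i, hi⟩ := h
    rw [Finset.sum_eq_single i (fun i' _ hi' ↦ ?_) (by simp)]
    · exact hc i hi
    · rw [hD i' j fun h ↦ hi' (Fin.ext (h.trans hi.symm))]; ring
  · push Not at h
    rw [Finset.sum_eq_zero fun i _ ↦ by rw [hD i j (h i)]; ring]
    exact hc0

lemma le_l2_opNorm_sub_of_rank_le {S B : Matrix (Fin N) (Fin M) ℝ} (hS : IsRectDiag S) {t : ℕ}
    (htN : t < N) (htM : t < M) {c : ℝ} (hc0 : 0 ≤ c)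
    (hc : ∀ (i : Fin N) (j : Fin M), (i : ℕ) = j → (i : ℕ) ≤ t → c ≤ S i j) (hB : B.rank ≤ t) :
    c ≤ ‖S - B‖ := by
  have hcol (j : Fin (t + 1)) : c ^ 2 ≤ ∑ i, S.submatrix id (Fin.castLE htM) i j ^ 2 := by
    let i : Fin N := ⟨j, j.2.trans_le htN⟩
    calc c ^ 2 ≤ S i (Fin.castLE htM j) ^ 2 :=
          pow_le_pow_left₀ hc0 (hc _ _ rfl (Nat.lt_succ_iff.mp j.2)) 2
      _ ≤ _ := Finset.single_le_sum (f := fun i ↦ S i (Fin.castLE htM j) ^ 2)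
          (fun _ _ ↦ sq_nonneg _) (Finset.mem_univ i)
  have hrank : (B.submatrix id (Fin.castLE htM)).rank < Fintype.card (Fin (t + 1)) := by
    rw [Fintype.card_fin]; exact Nat.lt_succ_of_le ((rank_submatrix_le _ _ _).trans hB)
  calc c ≤ ‖S.submatrix id (Fin.castLE htM) - B.submatrix id (Fin.castLE htM)‖ :=
        le_l2_opNorm_sub_of_rank_lt (hS.submatrix_castLE htM).transpose_mul_self hcol hrank
    _ ≤ ‖S - B‖ := l2_opNorm_submatrix_le (S - B) (Fin.castLE_injective htM)

lemma l2_opNorm_mul_diagonal_tail {S : Matrix (Fin N) (Fin M) ℝ} (hS : IsRectDiag S) {t : ℕ}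
    (htN : t < N) (htM : t < M)
    (hnn : ∀ (i : Fin N) (j : Fin M), (i : ℕ) = j → t ≤ (i : ℕ) → 0 ≤ S i j)
    (hle : ∀ (i : Fin N) (j : Fin M), (i : ℕ) = j → t ≤ (i : ℕ) → S i j ≤ S ⟨t, htN⟩ ⟨t, htM⟩) :
    ‖S * diagonal (fun j : Fin M ↦ if t ≤ (j : ℕ) then (1 : ℝ) else 0)‖ = S ⟨t, htN⟩ ⟨t, htM⟩ := by
  set s := S ⟨t, htN⟩ ⟨t, htM⟩
  set T := S * diagonal (fun j : Fin M ↦ if t ≤ (j : ℕ) then (1 : ℝ) else 0)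
  have hT : IsRectDiag T := hS.mul_diagonal _
  have hs0 : 0 ≤ s := hnn _ _ rfl le_rfl
  -- `‖T‖ ^ 2` is the largest squared column norm of `T`, as `Tᵀ * T` is diagonal.
  have hcol : ‖fun j ↦ ∑ i, T i j ^ 2‖ = s ^ 2 := by
    refine le_antisymm ((pi_norm_le_iff_of_nonneg (sq_nonneg s)).mpr fun j ↦ ?_) ?_
    · rw [Real.norm_of_nonneg (Finset.sum_nonneg fun _ _ ↦ sq_nonneg _)]
      refine hT.sum_sq_le j (sq_nonneg s) fun i hij ↦ ?_
      simp only [T, Matrix.mul_diagonal]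
      split_ifs with htj
      · rw [mul_one]; exact pow_le_pow_left₀ (hnn i j hij (hij ▸ htj)) (hle i j hij (hij ▸ htj)) 2
      · rw [mul_zero, sq, zero_mul]; positivity
    · calc s ^ 2 = T ⟨t, htN⟩ ⟨t, htM⟩ ^ 2 := by simp [T, Matrix.mul_diagonal, s]
        _ ≤ ∑ i, T i ⟨t, htM⟩ ^ 2 := Finset.single_le_sum (f := fun i ↦ T i ⟨t, htM⟩ ^ 2)
            (fun _ _ ↦ sq_nonneg _) (Finset.mem_univ _)
        _ ≤ ‖fun j ↦ ∑ i, T i j ^ 2‖ := (Real.le_norm_self _).trans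
            (norm_le_pi_norm (fun j ↦ ∑ i, T i j ^ 2) ⟨t, htM⟩)
  have hnorm := l2_opNorm_sq_of_transpose_mul_self_eq_diagonal hT.transpose_mul_self
  rw [hcol] at hnorm
  exact (sq_eq_sq₀ (norm_nonneg _) hs0).mp hnorm

end IsRectDiag

end Matrix

lemma matrixSpectralNorm_eq_l2_opNorm {N M : ℕ} (A : Matrix (Fin N) (Fin M) ℝ) :
    matrixSpectralNorm A = ‖A‖ := rfl

lemma svdTruncation_eq {N M : ℕ} (U : Matrix (Fin N) (Fin N) ℝ) {S : Matrix (Fin N) (Fin M) ℝ}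
    (V : Matrix (Fin M) (Fin M) ℝ) (hS : S.IsRectDiag) {t : ℕ} (ht : t ≤ min N M) :
    svdTruncation U S V t ht =
      U * (S * diagonal fun j : Fin M ↦ if (j : ℕ) < t then (1 : ℝ) else 0) * Vᵀ := by
  have htM : t ≤ M := ht.trans (min_le_right N M)
  ext a b
  rw [← Matrix.mul_assoc, mul_apply]
  simp only [svdTruncation, Matrix.sum_apply, Matrix.smul_apply, vecMulVec_apply, smul_eq_mul,
    Matrix.mul_diagonal, transpose_apply]
  refine Fintype.sum_of_injective (Fin.castLE htM) (Fin.castLE_injective htM) _ _ (fun j hj ↦ ?_)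
    fun k ↦ ?_
  · rw [if_neg fun hjt ↦ hj ⟨⟨j, hjt⟩, rfl⟩, mul_zero, zero_mul]
  · rw [hS.mul_apply_eq U a (i := ⟨k, k.2.trans_le (ht.trans (min_le_left N M))⟩) rfl,
      if_pos (show (Fin.castLE htM k : ℕ) < t from k.2), mul_one]
    simp only [Fin.castLE]
    ring

lemma sub_svdTruncation_eq {N M : ℕ} (U : Matrix (Fin N) (Fin N) ℝ) {S : Matrix (Fin N) (Fin M) ℝ}
    (V : Matrix (Fin M) (Fin M) ℝ) (hS : S.IsRectDiag) {t : ℕ} (ht : t ≤ min N M) :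
    U * S * Vᵀ - svdTruncation U S V t ht =
      U * (S * diagonal fun j : Fin M ↦ if t ≤ (j : ℕ) then (1 : ℝ) else 0) * Vᵀ := by
  rw [svdTruncation_eq U V hS ht, ← Matrix.sub_mul, ← Matrix.mul_sub]
  congr 2
  ext i j
  rw [Matrix.sub_apply, Matrix.mul_diagonal, Matrix.mul_diagonal]
  split_ifs <;> first | omega | ring

theorem eckart_young_optimality_spectral_general {N M : ℕ}
    (A : Matrix (Fin N) (Fin M) ℝ) (U : Matrix (Fin N) (Fin N) ℝ)
    (S : Matrix (Fin N) (Fin M) ℝ) (V : Matrix (Fin M) (Fin M) ℝ)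
    (h : IsSVD A U S V) (t : ℕ) (ht : t < min N M) :
    (∀ B : Matrix (Fin N) (Fin M) ℝ, B.rank ≤ t →
      S ⟨t, lt_of_lt_of_le ht (min_le_left N M)⟩ ⟨t, lt_of_lt_of_le ht (min_le_right N M)⟩ ≤
        matrixSpectralNorm (A - B)) ∧
    matrixSpectralNorm (A - svdTruncation U S V t ht.le) =
      S ⟨t, lt_of_lt_of_le ht (min_le_left N M)⟩ ⟨t, lt_of_lt_of_le ht (min_le_right N M)⟩ := by
  obtain ⟨hU, hV, rfl, hS, hnn, hanti⟩ := h
  have htN : t < N := ht.trans_le (min_le_left N M)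
  have htM : t < M := ht.trans_le (min_le_right N M)
  have hconj (D : Matrix (Fin N) (Fin M) ℝ) : matrixSpectralNorm (U * D * Vᵀ) = ‖D‖ := by
    rw [matrixSpectralNorm_eq_l2_opNorm, ← conjTranspose_eq_transpose_of_trivial V]
    rw [← conjTranspose_eq_transpose_of_trivial] at hU hV
    exact l2_opNorm_mul_mul_conjTranspose hU hV D
  refine ⟨fun B hB ↦ ?_, ?_⟩
  · have hB' : U * (Uᵀ * B * V) * Vᵀ = B := by
      simp only [Matrix.mul_assoc, mul_eq_one_comm.mp hV, Matrix.mul_one, ← Matrix.mul_assoc U,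
        mul_eq_one_comm.mp hU, Matrix.one_mul]
    rw [← hB', ← Matrix.sub_mul, ← Matrix.mul_sub, hconj]
    exact IsRectDiag.le_l2_opNorm_sub_of_rank_le hS htN htM (hnn _ _ rfl)
      (fun i j hij hit ↦ hanti _ _ _ _ hij rfl hit)
      (((rank_mul_le_left _ _).trans (rank_mul_le_right _ _)).trans hB)
  · rw [sub_svdTruncation_eq U V hS, hconj]
    exact IsRectDiag.l2_opNorm_mul_diagonal_tail hS htN htM (fun i j hij _ ↦ hnn i j hij)
      (fun i j hij hti ↦ hanti _ _ _ _ rfl hij hti)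

/-- Eckart–Young optimality, spectral norm: every matrix `B` of rank at
most `t` satisfies `‖A − B‖₂ ≥ s_{t+1} = ‖A − A_t‖₂`, i.e. the rank-`t` truncated SVD is a
best rank-`t` approximation in the spectral norm. -/
theorem eckart_young_optimality_spectral {N M : ℕ}
    (A : Matrix (Fin N) (Fin M) ℝ) (U : Matrix (Fin N) (Fin N) ℝ)
    (S : Matrix (Fin N) (Fin M) ℝ) (V : Matrix (Fin M) (Fin M) ℝ)
    (h : IsSVD A U S V) (t : ℕ) (ht0 : 0 < t) (htr : t < A.rank) (ht : t < min N M) :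
    (∀ B : Matrix (Fin N) (Fin M) ℝ, B.rank ≤ t →
      S ⟨t, lt_of_lt_of_le ht (min_le_left N M)⟩ ⟨t, lt_of_lt_of_le ht (min_le_right N M)⟩ ≤
        matrixSpectralNorm (A - B)) ∧
    matrixSpectralNorm (A - svdTruncation U S V t ht.le) =
      S ⟨t, lt_of_lt_of_le ht (min_le_left N M)⟩ ⟨t, lt_of_lt_of_le ht (min_le_right N M)⟩ :=
  eckart_young_optimality_spectral_general A U S V h t ht
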